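/- Let g_ε : C² → C² be g_ε(z₁,z₂) = (z₁ + ε·P(z₁,z₂), z₂) where P is a polynomial with P(0)=0 and DP(0)=0. Then there exists δ > 0 such that for all ε ∈ C with |ε| < δ, the restriction of g_ε to D² is locally biholomorphic, g_ε(0)=0, Dg_ε(0)=I₂, and -(Dg_ε(z))⁻¹·g_ε(z) belongs to M(D²); i.e. g_ε is starlike on D² for all sufficiently small ε. -/

import Mathlib

/-!
The derivative of the shear `g(z) = (z₁ + εP(z), z₂)` is `1 + (ε DP(z)) ⊗ e₁`, invertible as soon
as `‖ε DP(z)‖ < 1`. The generator `u = -(Dg)⁻¹ g` satisfies `Dg(z)(u + z) = Dg(z) z - g(z)`, and the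
right-hand side is `(ε (DP(z) z - P(z)), 0)`; hence `u₂ = -z₂` and
`(u₁ + z₁)(1 + ε ∂₁P(z)) = ε (DP(z) z - P(z))`.
Since `P(0) = 0`, the mean value inequality bounds the right-hand side by `2|ε| C ‖z‖`, where `C`
bounds `DP` on the polydisc. So for `|ε| C ≤ 1/3` and `|z₂| ≤ |z₁|`, the point `u₁` lies in the
closed disc of radius `|z₁|` about `-z₁`, i.e. `Re(u₁/z₁) ≤ 0`.
-/

open Complex

def polydisc2 : Set (ℂ × ℂ) := {z | ‖z.1‖ < 1 ∧ ‖z.2‖ < 1}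

/-- The class `M(D²)` of infinitesimal generators on the unit polydisc in `ℂ²`. -/
def memM2 (h : ℂ × ℂ → ℂ × ℂ) : Prop :=
  DifferentiableOn ℂ h polydisc2 ∧ h 0 = 0 ∧
    fderiv ℂ h 0 = -ContinuousLinearMap.id ℂ (ℂ × ℂ) ∧
    (∀ z ∈ polydisc2, z.1 ≠ 0 → ‖z.2‖ ≤ ‖z.1‖ → ((h z).1 / z.1).re ≤ 0) ∧
    (∀ z ∈ polydisc2, z.2 ≠ 0 → ‖z.1‖ ≤ ‖z.2‖ → ((h z).2 / z.2).re ≤ 0)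

open Metric

section NewtonField

variable {𝕜 E : Type*} [NontriviallyNormedField 𝕜] [NormedAddCommGroup E] [NormedSpace 𝕜 E]

noncomputable def newtonField (𝕜 : Type*) [NontriviallyNormedField 𝕜] [NormedSpace 𝕜 E]
    (f : E → E) (z : E) : E :=
  -(Ring.inverse (fderiv 𝕜 f z)) (f z)

variable {f : E → E} {x : E}

theorem fderiv_apply_newtonField_add (hx : IsUnit (fderiv 𝕜 f x)) :
    fderiv 𝕜 f x (newtonField 𝕜 f x + x) = fderiv 𝕜 f x x - f x := by
  have h := congrArg (· (f x)) (Ring.mul_inverse_cancel _ hx)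
  simp only [mul_apply_eq_comp] at h
  rw [map_add, newtonField, map_neg, h, one_apply_eq_self, neg_add_eq_sub]

variable [CompleteSpace E]

theorem differentiableAt_ringInverse_fderiv (hf : ContDiffAt 𝕜 2 f x)
    (hx : IsUnit (fderiv 𝕜 f x)) : DifferentiableAt 𝕜 (fun z => Ring.inverse (fderiv 𝕜 f z)) x :=
  (differentiableAt_inverse hx).comp (g := Ring.inverse) x
    ((hf.fderiv_right (m := 1) le_rfl).differentiableAt one_ne_zero)

theorem differentiableAt_newtonField (hf : ContDiffAt 𝕜 2 f x) (hx : IsUnit (fderiv 𝕜 f x)) :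
    DifferentiableAt 𝕜 (newtonField 𝕜 f) x :=
  ((differentiableAt_ringInverse_fderiv hf hx).clm_apply (hf.differentiableAt two_ne_zero)).neg

theorem hasFDerivAt_newtonField (hf : ContDiffAt 𝕜 2 f x) (hx : f x = 0)
    (hDx : fderiv 𝕜 f x = ContinuousLinearMap.id 𝕜 E) :
    HasFDerivAt (newtonField 𝕜 f) (-ContinuousLinearMap.id 𝕜 E) x := by
  have hinv := differentiableAt_ringInverse_fderiv hf (by rw [hDx]; exact isUnit_one)
  refine (hinv.hasFDerivAt.clm_apply (hf.differentiableAt two_ne_zero).hasFDerivAt).fun_neg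
    |>.congr_fderiv ?_
  rw [hx, hDx, ← ContinuousLinearMap.one_def, Ring.inverse_one, map_zero, add_zero]
  rfl

end NewtonField

section Shear

variable {𝕜 : Type*} [NontriviallyNormedField 𝕜]

def shear (ε : 𝕜) (P : 𝕜 × 𝕜 → 𝕜) (z : 𝕜 × 𝕜) : 𝕜 × 𝕜 := (z.1 + ε * P z, z.2)

variable {ε : 𝕜} {P : 𝕜 × 𝕜 → 𝕜} {z : 𝕜 × 𝕜}

theorem shear_zero (hP0 : P 0 = 0) : shear ε P 0 = 0 := by
  simp [shear, hP0]

theorem hasFDerivAt_shear {P' : 𝕜 × 𝕜 →L[𝕜] 𝕜} (hP : HasFDerivAt P P' z) :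
    HasFDerivAt (shear ε P) (1 + (ε • P').smulRight (1, 0)) z := by
  refine ((hasFDerivAt_fst.add (hP.const_mul ε)).prodMk hasFDerivAt_snd).congr_fderiv ?_
  ext <;> simp

theorem fderiv_shear (hP : DifferentiableAt 𝕜 P z) :
    fderiv 𝕜 (shear ε P) z = 1 + (ε • fderiv 𝕜 P z).smulRight (1, 0) :=
  (hasFDerivAt_shear hP.hasFDerivAt).fderiv

theorem fderiv_shear_eq_one (hP : DifferentiableAt 𝕜 P z) (hDP : fderiv 𝕜 P z = 0) :
    fderiv 𝕜 (shear ε P) z = 1 := by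
  rw [fderiv_shear hP, hDP]
  ext <;> simp

theorem contDiff_shear {n : WithTop ℕ∞} (hP : ContDiff 𝕜 n P) : ContDiff 𝕜 n (shear ε P) := by
  unfold shear
  fun_prop

theorem isUnit_one_add_smulRight [CompleteSpace 𝕜] {L : 𝕜 × 𝕜 →L[𝕜] 𝕜} (hL : ‖L‖ < 1) :
    IsUnit (1 + L.smulRight ((1 : 𝕜), (0 : 𝕜))) := by
  have h : ‖-L.smulRight ((1 : 𝕜), (0 : 𝕜))‖ < 1 := by
    rw [norm_neg, ContinuousLinearMap.norm_smulRight_apply]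
    simpa [Prod.norm_def] using hL
  simpa [sub_neg_eq_add] using isUnit_one_sub_of_norm_lt_one h

theorem isUnit_fderiv_shear [CompleteSpace 𝕜] (hP : DifferentiableAt 𝕜 P z)
    (hε : ‖ε‖ * ‖fderiv 𝕜 P z‖ < 1) : IsUnit (fderiv 𝕜 (shear ε P) z) := by
  rw [fderiv_shear hP]
  exact isUnit_one_add_smulRight (by rwa [norm_smul])

theorem snd_eq_zero_and_fst_mul_of_one_add_smulRight_apply {L : 𝕜 × 𝕜 →L[𝕜] 𝕜} {v : 𝕜 × 𝕜}
    {a : 𝕜} (h : (1 + L.smulRight ((1 : 𝕜), (0 : 𝕜))) v = (a, 0)) :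
    v.2 = 0 ∧ v.1 * (1 + L (1, 0)) = a := by
  obtain ⟨v₁, v₂⟩ := v
  simp only [add_apply, one_apply_eq_self, ContinuousLinearMap.smulRight_apply, Prod.smul_mk,
    smul_eq_mul, Prod.mk_add_mk, Prod.mk.injEq, mul_one, mul_zero, add_zero] at h
  obtain ⟨h₁, rfl⟩ := h
  have hL : L (v₁, 0) = v₁ * L (1, 0) := by
    rw [← smul_eq_mul, ← map_smul, Prod.smul_mk, smul_eq_mul, smul_eq_mul, mul_one, mul_zero]
  exact ⟨rfl, by linear_combination h₁ - hL⟩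

theorem newtonField_shear_add (hP : DifferentiableAt 𝕜 P z)
    (hu : IsUnit (fderiv 𝕜 (shear ε P) z)) :
    (newtonField 𝕜 (shear ε P) z + z).2 = 0 ∧
      (newtonField 𝕜 (shear ε P) z + z).1 * (1 + ε * fderiv 𝕜 P z (1, 0)) =
        ε * (fderiv 𝕜 P z z - P z) := by
  have h := fderiv_apply_newtonField_add hu
  have hrhs : fderiv 𝕜 (shear ε P) z z - shear ε P z = (ε * (fderiv 𝕜 P z z - P z), 0) := by
    rw [fderiv_shear hP]
    ext
    · simp [shear]; ring
    · simp [shear]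
  rw [hrhs, fderiv_shear hP] at h
  simpa using snd_eq_zero_and_fst_mul_of_one_add_smulRight_apply h

end Shear

theorem contDiff_eval_mvPolynomial_fin_two {𝕜 : Type*} [NontriviallyNormedField 𝕜]
    (p : MvPolynomial (Fin 2) 𝕜) {n : WithTop ℕ∞} :
    ContDiff 𝕜 n
      (fun z : 𝕜 × 𝕜 => MvPolynomial.eval (fun i : Fin 2 => if i = 0 then z.1 else z.2) p) := by
  refine AnalyticOnNhd.contDiff fun z _ => AnalyticAt.aeval_mvPolynomial (fun i => ?_) p
  fin_cases i
  · exact analyticAt_fst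
  · exact analyticAt_snd

theorem norm_fderiv_apply_sub_le {𝕜 E F : Type*} [NontriviallyNormedField 𝕜]
    [IsRCLikeNormedField 𝕜] [NormedAddCommGroup E] [NormedSpace ℝ E] [NormedSpace 𝕜 E]
    [NormedAddCommGroup F] [NormedSpace 𝕜 F] {P : E → F} {r C : ℝ}
    (hP : ∀ z ∈ ball 0 r, DifferentiableAt 𝕜 P z) (hP0 : P 0 = 0)
    (hC : ∀ z ∈ ball 0 r, ‖fderiv 𝕜 P z‖ ≤ C) {z : E} (hz : z ∈ ball 0 r) :
    ‖fderiv 𝕜 P z z - P z‖ ≤ 2 * C * ‖z‖ := by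
  have hmvt := (convex_ball (0 : E) r).norm_image_sub_le_of_norm_fderiv_le hP hC
    (mem_ball_self (pos_of_mem_ball hz)) hz
  rw [hP0, sub_zero, sub_zero] at hmvt
  calc ‖fderiv 𝕜 P z z - P z‖ ≤ ‖fderiv 𝕜 P z z‖ + ‖P z‖ := norm_sub_le _ _
    _ ≤ C * ‖z‖ + C * ‖z‖ :=
      add_le_add ((fderiv 𝕜 P z).le_opNorm z |>.trans (by gcongr; exact hC z hz)) hmvt
    _ = 2 * C * ‖z‖ := by ring

theorem re_div_nonpos_of_norm_add_le {u z : ℂ} (h : ‖u + z‖ ≤ ‖z‖) : (u / z).re ≤ 0 := by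
  rcases eq_or_ne z 0 with rfl | hz
  · simp
  have hre : (u / z).re = ((u + z) / z).re - 1 := by
    rw [add_div, div_self hz, Complex.add_re, Complex.one_re, add_sub_cancel_right]
  have hle : ‖(u + z) / z‖ ≤ 1 := by
    rw [norm_div]
    exact div_le_one_of_le₀ h (norm_nonneg z)
  linarith [Complex.re_le_norm ((u + z) / z)]

theorem polydisc2_eq_ball : polydisc2 = ball (0 : ℂ × ℂ) 1 := by
  ext z
  simp [polydisc2, Prod.norm_def]

section PolydiscShear

variable {P : ℂ × ℂ → ℂ} {C : ℝ} {ε : ℂ} {z : ℂ × ℂ}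

theorem isUnit_fderiv_shear_of_mem_polydisc2 (hP : Differentiable ℂ P)
    (hC : ∀ z ∈ polydisc2, ‖fderiv ℂ P z‖ ≤ C) (hε : ‖ε‖ * C ≤ 1 / 3) (hz : z ∈ polydisc2) :
    IsUnit (fderiv ℂ (shear ε P) z) :=
  isUnit_fderiv_shear (hP z)
    ((mul_le_mul_of_nonneg_left (hC z hz) (norm_nonneg ε)).trans_lt (by linarith))

theorem norm_newtonField_shear_fst_add_le (hP : Differentiable ℂ P) (hP0 : P 0 = 0)
    (hC : ∀ z ∈ polydisc2, ‖fderiv ℂ P z‖ ≤ C) (hε : ‖ε‖ * C ≤ 1 / 3) (hz : z ∈ polydisc2) :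
    ‖(newtonField ℂ (shear ε P) z).1 + z.1‖ ≤ ‖z‖ := by
  obtain ⟨-, hfst⟩ :=
    newtonField_shear_add (hP z) (isUnit_fderiv_shear_of_mem_polydisc2 hP hC hε hz)
  set c := 1 + ε * fderiv ℂ P z (1, 0)
  have hc : 2 / 3 ≤ ‖c‖ := by
    have h₁ : ‖ε * fderiv ℂ P z (1, 0)‖ ≤ ‖ε‖ * C := by
      rw [norm_mul]
      gcongr
      calc ‖fderiv ℂ P z (1, 0)‖ ≤ ‖fderiv ℂ P z‖ * ‖((1 : ℂ), (0 : ℂ))‖ :=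
            ContinuousLinearMap.le_opNorm _ _
        _ ≤ C := by simpa [Prod.norm_def] using hC z hz
    have h₂ := norm_sub_norm_le (1 : ℂ) (-(ε * fderiv ℂ P z (1, 0)))
    rw [sub_neg_eq_add, norm_neg, norm_one] at h₂
    linarith
  have hrhs : ‖ε * (fderiv ℂ P z z - P z)‖ ≤ 2 / 3 * ‖z‖ := by
    rw [polydisc2_eq_ball] at hC hz
    rw [norm_mul]
    calc ‖ε‖ * ‖fderiv ℂ P z z - P z‖ ≤ ‖ε‖ * (2 * C * ‖z‖) :=
          mul_le_mul_of_nonneg_left (norm_fderiv_apply_sub_le (fun w _ => hP w) hP0 hC hz)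
            (norm_nonneg ε)
      _ ≤ 2 / 3 * ‖z‖ := by nlinarith [norm_nonneg z]
  refine le_of_mul_le_mul_right ?_ (by linarith : 0 < ‖c‖)
  calc ‖(newtonField ℂ (shear ε P) z).1 + z.1‖ * ‖c‖ = ‖ε * (fderiv ℂ P z z - P z)‖ := by
        rw [← norm_mul, ← hfst, Prod.fst_add]
    _ ≤ ‖z‖ * ‖c‖ := by nlinarith [norm_nonneg z]

theorem memM2_newtonField_shear (hP : ContDiff ℂ 2 P) (hP0 : P 0 = 0) (hDP0 : fderiv ℂ P 0 = 0)
    (hC : ∀ z ∈ polydisc2, ‖fderiv ℂ P z‖ ≤ C) (hε : ‖ε‖ * C ≤ 1 / 3) :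
    memM2 (newtonField ℂ (shear ε P)) := by
  have hdiff : Differentiable ℂ P := hP.differentiable two_ne_zero
  have hunit := fun z (hz : z ∈ polydisc2) => isUnit_fderiv_shear_of_mem_polydisc2 hdiff hC hε hz
  refine ⟨fun z hz => ?_, by simp [newtonField, shear_zero hP0], ?_, fun z hz _ hle => ?_,
    fun z hz hz₂ _ => ?_⟩
  · exact (differentiableAt_newtonField (contDiff_shear hP).contDiffAt
      (hunit z hz)).differentiableWithinAt
  · refine (hasFDerivAt_newtonField (contDiff_shear hP).contDiffAt (shear_zero hP0) ?_).fderiv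
    rw [fderiv_shear_eq_one (hdiff 0) hDP0, ContinuousLinearMap.one_def]
  · apply re_div_nonpos_of_norm_add_le
    simpa [Prod.norm_def, max_eq_left hle] using
      norm_newtonField_shear_fst_add_le hdiff hP0 hC hε hz
  · have hsnd := (newtonField_shear_add (hdiff z) (hunit z hz)).1
    rw [Prod.snd_add, add_eq_zero_iff_eq_neg] at hsnd
    rw [hsnd, neg_div, div_self hz₂, Complex.neg_re, Complex.one_re]
    norm_num

end PolydiscShear

/-- Small polynomial shears of the identity are starlike: if `P` is a polynomial on `ℂ²`
with `P(0) = 0` and `DP(0) = 0`, then there is `δ > 0` such that for all `|ε| < δ` the map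
`g_ε(z) = (z₁ + εP(z), z₂)` is normalized, locally biholomorphic on `D²`, and
`-(Dg_ε)⁻¹·g_ε ∈ M(D²)`. -/
theorem small_polynomial_shear_starlike (P : ℂ × ℂ → ℂ)
    (hPpoly : ∃ p : MvPolynomial (Fin 2) ℂ,
      ∀ z : ℂ × ℂ, P z = MvPolynomial.eval (fun i : Fin 2 => if i = 0 then z.1 else z.2) p)
    (hP0 : P 0 = 0) (hDP0 : fderiv ℂ P 0 = 0) :
    ∃ δ : ℝ, 0 < δ ∧ ∀ ε : ℂ, ‖ε‖ < δ →
      (fun z : ℂ × ℂ => (z.1 + ε * P z, z.2)) 0 = 0 ∧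
      fderiv ℂ (fun z : ℂ × ℂ => (z.1 + ε * P z, z.2)) 0 = ContinuousLinearMap.id ℂ (ℂ × ℂ) ∧
      (∀ z ∈ polydisc2, IsUnit (fderiv ℂ (fun z : ℂ × ℂ => (z.1 + ε * P z, z.2)) z)) ∧
      memM2 (fun z : ℂ × ℂ =>
        -(Ring.inverse (fderiv ℂ (fun z : ℂ × ℂ => (z.1 + ε * P z, z.2)) z))
          ((z.1 + ε * P z, z.2))) := by
  obtain ⟨p, hp⟩ := hPpoly
  have hP : ContDiff ℂ 2 P := by
    rw [show P = _ from funext hp]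
    exact contDiff_eval_mvPolynomial_fin_two p
  have hdiff : Differentiable ℂ P := hP.differentiable two_ne_zero
  obtain ⟨C, hC⟩ := (isCompact_closedBall (0 : ℂ × ℂ) 1).exists_bound_of_continuousOn
    (hP.continuous_fderiv two_ne_zero).continuousOn
  have hC₀ : 0 ≤ C := (norm_nonneg _).trans (hC 0 (mem_closedBall_self zero_le_one))
  have hCpoly : ∀ z ∈ polydisc2, ‖fderiv ℂ P z‖ ≤ C := fun z hz =>
    hC z (ball_subset_closedBall (polydisc2_eq_ball ▸ hz))
  refine ⟨1 / (3 * (C + 1)), by positivity, fun ε hε => ?_⟩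
  have hεC : ‖ε‖ * C ≤ 1 / 3 := by
    rw [lt_div_iff₀ (by positivity)] at hε
    nlinarith [norm_nonneg ε]
  exact ⟨shear_zero hP0, fderiv_shear_eq_one (hdiff 0) hDP0,
    fun z hz => isUnit_fderiv_shear_of_mem_polydisc2 hdiff hCpoly hεC hz,
    memM2_newtonField_shear hP hP0 hDP0 hCpoly hεC⟩
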